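/- arXiv:1006.3816 — 7 statements merged into one kernel-verified Lean document; each statement's English description precedes it below -/
import Mathlib

section
/- Let S be a semigroup and let p be an idempotent ultrafilter on S, i.e. p·p = p. For A ⊆ S write A^{-p} := {s ∈ S | {t ∈ S | s·t ∈ A} ∈ p} and A* := A ∩ A^{-p}. Then for every A ∈ p one has A* ∈ p and (A*)* = A* (Galvin Fixpoint Lemma). -/
attribute [local instance] Ultrafilter.mul

/-- For `A ⊆ S`, `A^{-p} = {s ∈ S | {t ∈ S | s·t ∈ A} ∈ p}`. -/
def minusUF {S : Type*} [Mul S] (p : Ultrafilter S) (A : Set S) : Set S :=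
  {s | {t | s * t ∈ A} ∈ p}

/-- `A* = A ∩ A^{-p}`. -/
def starUF {S : Type*} [Mul S] (p : Ultrafilter S) (A : Set S) : Set S :=
  A ∩ minusUF p A

/-! Since `A ∈ p * q ↔ A^{-q} ∈ p`, idempotence of `p` means that `A ∈ p` implies
`A^{-p} ∈ p`, which gives `A* ∈ p`. The map `A ↦ A^{-p}` commutes with intersections and, by
associativity, with left translates `s⁻¹A = {t | s·t ∈ A}`. So for `s ∈ A*`, idempotence applied
to `s⁻¹A ∈ p` yields `s⁻¹(A^{-p}) ∈ p`, i.e. `s ∈ (A^{-p})^{-p}`; hence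
`A* ⊆ A^{-p} ∩ (A^{-p})^{-p} = (A*)^{-p}`, and then `(A*)* = A* ∩ (A*)^{-p} = A*`. -/

section

variable {S : Type*}

lemma mem_mul_iff_mem_minusUF [Mul S] (p q : Ultrafilter S) (A : Set S) :
    A ∈ p * q ↔ minusUF q A ∈ p :=
  Ultrafilter.eventually_mul p q (· ∈ A)

lemma minusUF_mem_of_mul_self [Mul S] {p : Ultrafilter S} (hp : p * p = p) {A : Set S}
    (hA : A ∈ p) : minusUF p A ∈ p := by
  rwa [← mem_mul_iff_mem_minusUF, hp]

lemma minusUF_inter [Mul S] (p : Ultrafilter S) (A B : Set S) :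
    minusUF p (A ∩ B) = minusUF p A ∩ minusUF p B := by
  ext s
  exact Filter.inter_mem_iff

lemma minusUF_preimage_mul_left [Semigroup S] (p : Ultrafilter S) (s : S) (A : Set S) :
    minusUF p ((s * ·) ⁻¹' A) = (s * ·) ⁻¹' minusUF p A := by
  ext t
  simp only [minusUF, Set.mem_preimage, Set.mem_ofPred_eq, mul_assoc]

lemma starUF_mem_of_mul_self [Mul S] {p : Ultrafilter S} (hp : p * p = p) {A : Set S}
    (hA : A ∈ p) : starUF p A ∈ p :=
  Filter.inter_mem hA (minusUF_mem_of_mul_self hp hA)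

lemma starUF_subset_minusUF_starUF [Semigroup S] {p : Ultrafilter S} (hp : p * p = p)
    (A : Set S) : starUF p A ⊆ minusUF p (starUF p A) := by
  rintro s ⟨-, hs⟩
  rw [starUF, minusUF_inter]
  refine ⟨hs, ?_⟩
  have h := minusUF_mem_of_mul_self hp (A := (s * ·) ⁻¹' A) hs
  rwa [minusUF_preimage_mul_left] at h

lemma starUF_eq_self_of_subset_minusUF [Mul S] {p : Ultrafilter S} {A : Set S}
    (hA : A ⊆ minusUF p A) : starUF p A = A :=
  Set.inter_eq_left.mpr hA

end

/-- Galvin Fixpoint Lemma. -/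
theorem galvin_fixpoint {S : Type*} [Semigroup S] (p : Ultrafilter S)
    (hp : p * p = p) {A : Set S} (hA : A ∈ p) :
    starUF p A ∈ p ∧ starUF p (starUF p A) = starUF p A :=
  ⟨starUF_mem_of_mul_self hp hA,
    starUF_eq_self_of_subset_minusUF (starUF_subset_minusUF_starUF hp A)⟩
end

section
/- If a sequence x : ℕ → ℕ has sufficient growth, then x has unique sums: for all nonempty finite sets s, t ⊆ ℕ, ∑_{i∈s} x_i + ∑_{i∈t} x_i ∈ FS(x) if and only if s ∩ t = ∅ (in which case the sum equals ∑_{i∈s∪t} x_i). -/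
/-- `FS(x)`: the set of all finite sums `∑_{i∈s} x i` over nonempty finite `s ⊆ ℕ`. -/
def FS (x : ℕ → ℕ) : Set ℕ := {n | ∃ s : Finset ℕ, s.Nonempty ∧ ∑ i ∈ s, x i = n}

/-- `x` has sufficient growth: `x n > 4·∑_{i<n} x i` for every `n`. -/
def SufficientGrowth (x : ℕ → ℕ) : Prop :=
  ∀ n, 4 * ∑ i ∈ Finset.range n, x i < x n

lemma digit_unique (x : ℕ → ℕ) (hx : SufficientGrowth x) (a b : ℕ → ℕ)
    (ha : ∀ i, a i ≤ 2) (hb : ∀ i, b i ≤ 2) :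
    ∀ N, ∑ i ∈ Finset.range N, a i * x i = ∑ i ∈ Finset.range N, b i * x i →
      ∀ i < N, a i = b i := by
  intro N
  induction N with
  | zero => intro _ i hi; omega
  | succ n ih =>
    intro h i hi
    rw [Finset.sum_range_succ, Finset.sum_range_succ] at h
    have hT := hx n
    have hA : ∑ i ∈ Finset.range n, a i * x i ≤ 2 * ∑ i ∈ Finset.range n, x i := by
      rw [Finset.mul_sum]
      exact Finset.sum_le_sum fun i _ => Nat.mul_le_mul_right _ (ha i)
    have hB : ∑ i ∈ Finset.range n, b i * x i ≤ 2 * ∑ i ∈ Finset.range n, x i := by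
      rw [Finset.mul_sum]
      exact Finset.sum_le_sum fun i _ => Nat.mul_le_mul_right _ (hb i)
    have hab : a n = b n := by
      have h2 := ha n; have h3 := hb n
      have h4 : a n = 0 ∨ a n = 1 ∨ a n = 2 := by omega
      have h5 : b n = 0 ∨ b n = 1 ∨ b n = 2 := by omega
      rcases h4 with h4 | h4 | h4 <;> rcases h5 with h5 | h5 | h5 <;>
        simp only [h4, h5, zero_mul, one_mul] at h ⊢ <;> omega
    rcases Nat.lt_succ_iff_lt_or_eq.mp hi with hi' | hi'
    · rw [hab] at h
      exact ih (by omega) i hi'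
    · rw [hi']; exact hab

lemma sum_as_digits (x : ℕ → ℕ) (s : Finset ℕ) {N : ℕ} (hs : s ⊆ Finset.range N) :
    ∑ i ∈ Finset.range N, (if i ∈ s then 1 else 0) * x i = ∑ i ∈ s, x i := by
  simp only [ite_mul, one_mul, zero_mul, Finset.sum_ite_mem,
    Finset.inter_eq_right.mpr hs]

/-- Sufficient growth implies unique sums. -/
theorem sufficientGrowth_unique_sums (x : ℕ → ℕ) (hx : SufficientGrowth x) :
    ∀ s t : Finset ℕ, s.Nonempty → t.Nonempty →
      (((∑ i ∈ s, x i) + ∑ i ∈ t, x i ∈ FS x) ↔ s ∩ t = ∅) ∧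
      (s ∩ t = ∅ → (∑ i ∈ s, x i) + ∑ i ∈ t, x i = ∑ i ∈ s ∪ t, x i) := by
  intro s t hs ht
  have hdisj : s ∩ t = ∅ → (∑ i ∈ s, x i) + ∑ i ∈ t, x i = ∑ i ∈ s ∪ t, x i := by
    intro h
    exact (Finset.sum_union (Finset.disjoint_iff_inter_eq_empty.mpr h)).symm
  refine ⟨⟨?_, fun h => ?_⟩, hdisj⟩
  · rintro ⟨u, hu, husum⟩
    obtain ⟨N, hN⟩ := Finset.exists_nat_subset_range (s ∪ t ∪ u)
    have hsN : s ⊆ Finset.range N := (Finset.subset_union_left.trans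
      Finset.subset_union_left).trans hN
    have htN : t ⊆ Finset.range N := (Finset.subset_union_right.trans
      Finset.subset_union_left).trans hN
    have huN : u ⊆ Finset.range N := Finset.subset_union_right.trans hN
    set a : ℕ → ℕ := fun i => (if i ∈ s then 1 else 0) + (if i ∈ t then 1 else 0) with ha
    set b : ℕ → ℕ := fun i => if i ∈ u then 1 else 0 with hb
    have hsum : ∑ i ∈ Finset.range N, a i * x i = ∑ i ∈ Finset.range N, b i * x i := by
      simp only [ha, hb, add_mul, Finset.sum_add_distrib,
        sum_as_digits x s hsN, sum_as_digits x t htN, sum_as_digits x u huN, husum]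
    have key := digit_unique x hx a b
      (fun i => by simp only [ha]; split_ifs <;> norm_num)
      (fun i => by simp only [hb]; split_ifs <;> norm_num) N hsum
    by_contra hne
    obtain ⟨j, hj⟩ := Finset.nonempty_iff_ne_empty.mpr hne
    have hjs := Finset.mem_inter.mp hj
    have hjN : j < N := Finset.mem_range.mp (hsN hjs.1)
    have := key j hjN
    simp only [ha, hb, if_pos hjs.1, if_pos hjs.2] at this
    split_ifs at this <;> omega
  · exact ⟨s ∪ t, hs.mono Finset.subset_union_left, (hdisj h).symm⟩
end

section
/- Sufficient growth is hereditary for condensations: if x : ℕ → ℕ has sufficient growth and y : ℕ → ℕ is strictly increasing with FS(y) ⊆ FS(x), then y has sufficient growth. -/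
/-- Sufficient growth is hereditary for (strictly increasing) condensations. -/
theorem sufficientGrowth_hereditary (x y : ℕ → ℕ)
    (hx : SufficientGrowth x) (hy : StrictMono y) (hcond : FS y ⊆ FS x) :
    SufficientGrowth y := by
  -- gap lemma: r < s → 4 * x r < x s
  have hgap : ∀ r s : ℕ, r < s → 4 * x r < x s := by
    intro r s hrs
    have h1 : x r ≤ ∑ i ∈ Finset.range s, x i :=
      Finset.single_le_sum (fun i _ => Nat.zero_le _) (Finset.mem_range.mpr hrs)
    have h2 := hx s
    omega
  have hpos : ∀ r, 0 < x r := fun r => lt_of_le_of_lt (Nat.zero_le _) (hx r)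
  -- interval lemma
  have hint : ∀ a ∈ FS x, ∃ r, x r ≤ a ∧ 4 * a < 5 * x r := by
    rintro a ⟨s, hs, rfl⟩
    refine ⟨s.max' hs, ?_, ?_⟩
    · exact Finset.single_le_sum (fun i _ => Nat.zero_le _) (s.max'_mem hs)
    · have h1 : ∑ i ∈ s, x i ≤ ∑ i ∈ Finset.range (s.max' hs + 1), x i := by
        apply Finset.sum_le_sum_of_subset
        intro i hi
        exact Finset.mem_range.mpr (Nat.lt_succ_of_le (s.le_max' i hi))
      rw [Finset.sum_range_succ] at h1
      have h2 := hx (s.max' hs)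
      omega
  intro n
  induction n with
  | zero =>
    simp only [Finset.range_zero, Finset.sum_empty, Nat.mul_zero]
    have h0 : y 0 ∈ FS x :=
      hcond ⟨{0}, Finset.singleton_nonempty 0, Finset.sum_singleton _ _⟩
    obtain ⟨r, hr1, _⟩ := hint _ h0
    have := hpos r
    omega
  | succ m ih =>
    set A := ∑ i ∈ Finset.range (m + 1), y i with hAdef
    -- memberships in FS x
    have hym : y m ∈ FS x :=
      hcond ⟨{m}, Finset.singleton_nonempty m, Finset.sum_singleton _ _⟩
    have hyn : y (m + 1) ∈ FS x :=
      hcond ⟨{m + 1}, Finset.singleton_nonempty _, Finset.sum_singleton _ _⟩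
    have hA : A ∈ FS x := hcond ⟨Finset.range (m + 1), Finset.nonempty_range_iff.mpr (Nat.succ_ne_zero m), rfl⟩
    have hB : A + y (m + 1) ∈ FS x := by
      refine hcond ⟨Finset.range (m + 2), Finset.nonempty_range_iff.mpr (Nat.succ_ne_zero _), ?_⟩
      rw [Finset.sum_range_succ]
    -- A = ∑ range m + y m, so from ih : 4A < 5 y m
    have hAsplit : A = (∑ i ∈ Finset.range m, y i) + y m := by
      rw [hAdef, Finset.sum_range_succ]
    have hA5 : 4 * A < 5 * y m := by omega
    have hymA : y m ≤ A :=
      hAsplit ▸ Nat.le_add_left _ _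
    have hstep : y m < y (m + 1) := hy (Nat.lt_succ_self m)
    obtain ⟨r, hr1, hr2⟩ := hint _ hym
    obtain ⟨p, hp1, hp2⟩ := hint _ hA
    obtain ⟨s, hs1, hs2⟩ := hint _ hyn
    obtain ⟨t, ht1, ht2⟩ := hint _ hB
    -- A is in interval r too
    have hAr : 4 * A < 5 * x r := by
      rcases lt_trichotomy p r with h | h | h
      · have := hgap p r h; omega
      · subst h; omega
      · have := hgap r p h; have := hpos r; omega
    have hxrA : x r ≤ A := le_trans hr1 hymA
    by_contra hcon
    push_neg at hcon  -- y (m+1) ≤ 4 * A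
    rcases Nat.lt_or_ge r s with hrs | hsr
    · -- r < s : compare t with s
      have h1 := hgap r s hrs
      rcases lt_trichotomy t s with h | h | h
      · have h2 := hgap t s h; have := hpos t; omega
      · -- t = s
        subst h; omega
      · have h2 := hgap s t h; have := hpos s; omega
    · -- s ≤ r
      have hxs_le : x s ≤ x r := by
        rcases Nat.lt_or_ge s r with h | h
        · have := hgap s r h; omega
        · have : s = r := le_antisymm hsr h; exact this ▸ le_refl _
      rcases Nat.lt_or_ge r t with h | h
      · have h2 := hgap r t h; have := hpos r; omega
      · -- t ≤ r
        have hxt_le : x t ≤ x r := by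
          rcases Nat.lt_or_ge t r with h' | h'
          · have := hgap t r h'; omega
          · have : t = r := le_antisymm h h'; exact this ▸ le_refl _
        have := hpos r
        omega
end

section
/- Being a witness for specialness is hereditary for condensations: if a strongly summable ultrafilter p on ℕ is special with respect to x, and y is a strictly increasing condensation of x with FS(y) ∈ p, then p is special with respect to y. -/
/-- The `x`-support of `z`: the set of indices occurring in some representation of `z`
as a nonempty finite sum of the `x i`.  When `x` has sufficient growth, representations
are unique and this is exactly `x-supp(z)`. -/
def xsupp (x : ℕ → ℕ) (z : ℕ) : Set ℕ :=
  {i | ∃ s : Finset ℕ, s.Nonempty ∧ ∑ j ∈ s, x j = z ∧ i ∈ s}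

/-- The `x`-support of a sequence `y`: `⋃_n x-supp(y n)`. -/
def xsuppSeq (x y : ℕ → ℕ) : Set ℕ := ⋃ n, xsupp x (y n)

/-- `p` is strongly summable. -/
def StronglySummable (p : Ultrafilter ℕ) : Prop :=
  ∀ A ∈ p, ∃ x : ℕ → ℕ, (∀ n, 0 < x n) ∧ FS x ⊆ A ∧ FS x ∈ p

/-- `p` is special with respect to `x`. -/
def SpecialWRT (p : Ultrafilter ℕ) (x : ℕ → ℕ) : Prop :=
  SufficientGrowth x ∧ FS x ∈ p ∧
    ∀ L : Set ℕ, L.Infinite →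
      ∃ y : ℕ → ℕ, FS y ⊆ FS x ∧ FS y ∈ p ∧ (L \ xsuppSeq x y).Infinite

lemma sg_pos {x : ℕ → ℕ} (h : SufficientGrowth x) (n : ℕ) : 0 < x n :=
  lt_of_le_of_lt (Nat.zero_le _) (h n)

lemma sum_indicator (x : ℕ → ℕ) {s : Finset ℕ} {N : ℕ} (hs : s ⊆ Finset.range N) :
    ∑ i ∈ Finset.range N, (if i ∈ s then 1 else 0) * x i = ∑ i ∈ s, x i := by
  have h1 : ∀ i ∈ Finset.range N, (if i ∈ s then 1 else 0) * x i
      = if i ∈ s then x i else 0 := by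
    intro i _; split <;> simp
  rw [Finset.sum_congr rfl h1, Finset.sum_ite_mem, Finset.inter_eq_right.mpr hs]

lemma coeff_unique {x : ℕ → ℕ} (h : SufficientGrowth x) :
    ∀ (N : ℕ) (c d : ℕ → ℕ), (∀ i, c i ≤ 2) → (∀ i, d i ≤ 2) →
    (∑ i ∈ Finset.range N, c i * x i = ∑ i ∈ Finset.range N, d i * x i) →
    ∀ i < N, c i = d i := by
  intro N
  induction N with
  | zero => intro c d _ _ _ i hi; omega
  | succ N ih =>
    intro c d hc hd hsum
    have key : ∀ (c d : ℕ → ℕ), (∀ i, c i ≤ 2) → (∀ i, d i ≤ 2) →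
        (∑ i ∈ Finset.range (N+1), c i * x i = ∑ i ∈ Finset.range (N+1), d i * x i) →
        c N ≤ d N := by
      intro c d hc hd hs
      by_contra hlt
      push_neg at hlt
      rw [Finset.sum_range_succ, Finset.sum_range_succ] at hs
      have h1 : ∑ i ∈ Finset.range N, d i * x i ≤ 2 * ∑ i ∈ Finset.range N, x i := by
        rw [Finset.mul_sum]
        exact Finset.sum_le_sum (fun i _ => Nat.mul_le_mul_right _ (hd i))
      have h2 := h N
      have hxpos := sg_pos h N
      nlinarith [Nat.zero_le (∑ i ∈ Finset.range N, c i * x i), hlt]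
    have hN : c N = d N :=
      le_antisymm (key c d hc hd hsum) (key d c hd hc hsum.symm)
    have hsum' : ∑ i ∈ Finset.range N, c i * x i = ∑ i ∈ Finset.range N, d i * x i := by
      rw [Finset.sum_range_succ, Finset.sum_range_succ, hN] at hsum
      omega
    intro i hi
    rcases Nat.lt_succ_iff_lt_or_eq.mp hi with hi' | hi'
    · exact ih c d hc hd hsum' i hi'
    · rw [hi']; exact hN

lemma rep_unique {x : ℕ → ℕ} (h : SufficientGrowth x) {s t : Finset ℕ}
    (hst : ∑ i ∈ s, x i = ∑ i ∈ t, x i) : s = t := by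
  obtain ⟨N, hsN, htN⟩ : ∃ N, s ⊆ Finset.range N ∧ t ⊆ Finset.range N := by
    obtain ⟨N, hN⟩ := (s ∪ t).exists_nat_subset_range
    exact ⟨N, (Finset.subset_union_left).trans hN, (Finset.subset_union_right).trans hN⟩
  have := coeff_unique h N (fun i => if i ∈ s then 1 else 0) (fun i => if i ∈ t then 1 else 0)
    (by intro i; split <;> omega) (by intro i; split <;> omega)
    (by rw [sum_indicator x hsN, sum_indicator x htN]; exact hst)
  ext i
  constructor
  · intro hi
    have := this i (hsN hi |> Finset.mem_range.mp)
    simp [hi] at this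
    by_contra hit; simp [hit] at this
  · intro hi
    have := this i (htN hi |> Finset.mem_range.mp)
    simp [hi] at this
    by_contra hit; simp [hit] at this

lemma rep_add {x : ℕ → ℕ} (h : SufficientGrowth x) {s t u : Finset ℕ}
    (hsum : ∑ i ∈ s, x i + ∑ i ∈ t, x i = ∑ i ∈ u, x i) :
    Disjoint s t ∧ s ∪ t = u := by
  obtain ⟨N, hsN, htN, huN⟩ : ∃ N, s ⊆ Finset.range N ∧ t ⊆ Finset.range N ∧ u ⊆ Finset.range N := by
    obtain ⟨N, hN⟩ := (s ∪ t ∪ u).exists_nat_subset_range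
    exact ⟨N, ((Finset.subset_union_left).trans Finset.subset_union_left).trans hN,
      ((Finset.subset_union_right).trans Finset.subset_union_left).trans hN,
      (Finset.subset_union_right).trans hN⟩
  have key := coeff_unique h N
    (fun i => (if i ∈ s then 1 else 0) + (if i ∈ t then 1 else 0))
    (fun i => if i ∈ u then 1 else 0)
    (by intro i; split <;> split <;> omega) (by intro i; split <;> omega)
    (by
      have : ∑ i ∈ Finset.range N,
          ((if i ∈ s then 1 else 0) + (if i ∈ t then 1 else 0)) * x i
          = ∑ i ∈ Finset.range N, (if i ∈ s then 1 else 0) * x i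
            + ∑ i ∈ Finset.range N, (if i ∈ t then 1 else 0) * x i := by
        rw [← Finset.sum_add_distrib]
        exact Finset.sum_congr rfl (fun i _ => by ring)
      rw [this, sum_indicator x hsN, sum_indicator x htN, sum_indicator x huN]
      exact hsum)
  have hpt : ∀ i, i < N → ((if i ∈ s then (1:ℕ) else 0) + (if i ∈ t then 1 else 0)
      = if i ∈ u then 1 else 0) := fun i hi => key i hi
  constructor
  · rw [Finset.disjoint_left]
    intro i his hit
    have := hpt i (hsN his |> Finset.mem_range.mp)
    simp [his, hit] at this
    split at this <;> omega
  · ext i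
    simp only [Finset.mem_union]
    constructor
    · rintro (hi | hi)
      · have := hpt i (hsN hi |> Finset.mem_range.mp)
        simp [hi] at this
        by_contra hiu; simp [hiu] at this
      · have := hpt i (htN hi |> Finset.mem_range.mp)
        simp [hi] at this
        by_contra hiu; simp [hiu] at this
    · intro hi
      have := hpt i (huN hi |> Finset.mem_range.mp)
      simp [hi] at this
      by_contra hno
      push_neg at hno
      simp [hno.1, hno.2] at this
/-- Being a witness for specialness is hereditary for condensations. -/
theorem special_hereditary (p : Ultrafilter ℕ) (x y : ℕ → ℕ)
    (hp : StronglySummable p) (hx : SpecialWRT p x)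
    (hymono : StrictMono y) (hcond : FS y ⊆ FS x) (hyp : FS y ∈ p) :
    SpecialWRT p y := by
  obtain ⟨hgx, hFSx, hspec⟩ := hx
  have hyFS : ∀ n, y n ∈ FS x := fun n =>
    hcond ⟨{n}, Finset.singleton_nonempty n, by simp⟩
  choose s hsne hssum using hyFS
  have hdisj : ∀ a b, a ≠ b → Disjoint (s a) (s b) := by
    intro a b hab
    obtain ⟨u, _, hu⟩ : y a + y b ∈ FS x :=
      hcond ⟨{a, b}, by simp, by rw [Finset.sum_pair hab]⟩
    exact (rep_add hgx (show ∑ i ∈ s a, x i + ∑ i ∈ s b, x i = ∑ i ∈ u, x i by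
      rw [hssum, hssum, hu])).1
  set m : ℕ → ℕ := fun n => (s n).max' (hsne n) with hm
  have hmmono : StrictMono m := by
    intro a b hab
    have hne : m a ≠ m b := by
      intro h
      have h1 : m a ∈ s a := (s a).max'_mem _
      have h2 : m b ∈ s b := (s b).max'_mem _
      rw [← h] at h2
      exact Finset.disjoint_left.mp (hdisj a b hab.ne) h1 h2
    by_contra hle
    push_neg at hle
    have hmb : m b < m a := lt_of_le_of_ne hle (fun h => hne h.symm)
    have h1 : y b ≤ ∑ i ∈ Finset.range (m a), x i := by
      rw [← hssum b]
      apply Finset.sum_le_sum_of_subset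
      intro j hj
      exact Finset.mem_range.mpr (lt_of_le_of_lt (Finset.le_max' _ _ hj) hmb)
    have h2 : x (m a) ≤ y a := by
      rw [← hssum a]
      exact Finset.single_le_sum (fun i _ => Nat.zero_le _) ((s a).max'_mem _)
    have h3 := hgx (m a)
    have h4 := hymono hab
    omega
  have hxley : ∀ n, x (m n) ≤ y n := fun n => by
    rw [← hssum n]
    exact Finset.single_le_sum (fun i _ => Nat.zero_le _) ((s n).max'_mem _)
  have hgy : SufficientGrowth y := by
    intro n
    have hbi : ∑ i ∈ Finset.range n, y i = ∑ j ∈ (Finset.range n).biUnion s, x j := by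
      rw [Finset.sum_biUnion (fun a _ b _ hab => hdisj a b hab)]
      exact Finset.sum_congr rfl (fun i _ => (hssum i).symm)
    have hsub : (Finset.range n).biUnion s ⊆ Finset.range (m n) := by
      intro j hj
      simp only [Finset.mem_biUnion, Finset.mem_range] at hj ⊢
      obtain ⟨i, hi, hji⟩ := hj
      exact lt_of_le_of_lt (Finset.le_max' _ _ hji) (hmmono hi)
    have h1 : ∑ j ∈ (Finset.range n).biUnion s, x j ≤ ∑ j ∈ Finset.range (m n), x j :=
      Finset.sum_le_sum_of_subset hsub
    have h2 := hxley n
    have h3 := hgx (m n)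
    omega
  refine ⟨hgy, hyp, ?_⟩
  intro L hL
  have hL' : (m '' L).Infinite := hL.image (Set.injOn_of_injective hmmono.injective)
  obtain ⟨z, hz1, hz2, hz3⟩ := hspec (m '' L) hL'
  obtain ⟨w, hwpos, hwA, hwp⟩ := hp (FS z ∩ FS y) (Filter.inter_mem hz2 hyp)
  refine ⟨w, fun a ha => (hwA ha).2, hwp, ?_⟩
  have hzFS : ∀ t, z t ∈ FS x := fun t =>
    hz1 ⟨{t}, Finset.singleton_nonempty t, by simp⟩
  choose sz hszne hszsum using hzFS
  have hzdisj : ∀ a b, a ≠ b → Disjoint (sz a) (sz b) := by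
    intro a b hab
    obtain ⟨u, _, hu⟩ : z a + z b ∈ FS x :=
      hz1 ⟨{a, b}, by simp, by rw [Finset.sum_pair hab]⟩
    exact (rep_add hgx (show ∑ i ∈ sz a, x i + ∑ i ∈ sz b, x i = ∑ i ∈ u, x i by
      rw [hszsum, hszsum, hu])).1
  have hsubset : L \ m ⁻¹' (xsuppSeq x z) ⊆ L \ xsuppSeq y w := by
    rintro n ⟨hnL, hnS⟩
    refine ⟨hnL, ?_⟩
    intro hmem
    apply hnS
    simp only [xsuppSeq, Set.mem_iUnion, xsupp, Set.mem_setOf_eq] at hmem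
    obtain ⟨k, u, hune, husum, hnu⟩ := hmem
    have hwk : w k ∈ FS z := (hwA ⟨{k}, Finset.singleton_nonempty k, by simp⟩).1
    obtain ⟨T, hTne, hTsum⟩ := hwk
    have e1 : ∑ j ∈ u.biUnion s, x j = w k := by
      rw [Finset.sum_biUnion (fun a _ b _ hab => hdisj a b hab)]
      rw [Finset.sum_congr rfl (fun i _ => hssum i)]
      exact husum
    have e2 : ∑ j ∈ T.biUnion sz, x j = w k := by
      rw [Finset.sum_biUnion (fun a _ b _ hab => hzdisj a b hab)]
      rw [Finset.sum_congr rfl (fun i _ => hszsum i)]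
      exact hTsum
    have heq : u.biUnion s = T.biUnion sz := rep_unique hgx (e1.trans e2.symm)
    have hmn : m n ∈ T.biUnion sz :=
      heq ▸ (Finset.mem_biUnion.mpr ⟨n, hnu, (s n).max'_mem _⟩)
    obtain ⟨t, htT, hmt⟩ := Finset.mem_biUnion.mp hmn
    exact Set.mem_iUnion.mpr ⟨t, ⟨sz t, hszne t, hszsum t, hmt⟩⟩
  refine Set.Infinite.mono hsubset ?_
  have himg : m '' (L \ m ⁻¹' (xsuppSeq x z)) = m '' L \ xsuppSeq x z := by
    rw [Set.image_diff_preimage]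
  exact Set.Infinite.of_image m (himg ▸ hz3)
end

section
/- Every union ultrafilter is special: if u is a union ultrafilter on 𝔽, then for every infinite set L ⊆ ℕ there exists X ∈ u such that L \ ⋃X is infinite, where ⋃X denotes the union of all members of X. -/
/-- `𝔽`: the nonempty finite subsets of `ℕ`. -/
def FF : Type := {s : Finset ℕ // s.Nonempty}

/-- `FU(s)`: the set of all unions `⋃_{i∈t} s i` over nonempty finite `t ⊆ ℕ`. -/
def FU (s : ℕ → FF) : Set FF :=
  {u | ∃ t : Finset ℕ, t.Nonempty ∧ u.1 = t.biUnion fun i => (s i).1}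

/-- `u` is a union ultrafilter: it has a base of `FU`-sets of pairwise disjoint sequences. -/
def UnionUF (u : Ultrafilter FF) : Prop :=
  ∀ A ∈ u, ∃ s : ℕ → FF,
    (∀ i j, i ≠ j → Disjoint (s i).1 (s j).1) ∧ FU s ⊆ A ∧ FU s ∈ u

/-!
Enumerate `L` increasingly as `ℓ` and colour `v ∈ 𝔽` by the parity of the number of `i` with
`ℓ i, ℓ (i + 1) ∈ v`. This is a quadratic form over `𝔽₂` in the indicator of `ℓ⁻¹ v`, so on a
disjoint union it is additive up to its polar form, which counts the consecutive pairs split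
between the two pieces. The values of a quadratic form on the seven nonempty subsums of three
vectors add up to `0` in `𝔽₂`, so the odd colour class contains no `FU`-set of a disjoint
sequence; hence `u` contains an `FU(s)` of even colour, and any two blocks `s m`, `s n` split an
even number of consecutive pairs.

The set `G` of indices `i` with `ℓ i ∉ ⋃ s` must then be infinite. If it were finite, count modulo
`2` the consecutive pairs split between `G` and the blocks. For each block, the pairs it splits
with the other blocks are even in number and its total boundary has parity `[0 ∈ ℓ⁻¹ s m]`; summing
over the blocks gives `[0 ∉ G]`. Yet the same count is the boundary of `G`, of parity `[0 ∈ G]`.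
-/

open Finset Filter Function

section AdjacencyForm

variable {R : Type*} [CommRing R] {M N : ℕ} {f g h : ℕ → R}

def adjForm (N : ℕ) (f : ℕ → R) : R := ∑ i ∈ range N, f i * f (i + 1)

def adjPolar (N : ℕ) (f g : ℕ → R) : R := ∑ i ∈ range N, (f i * g (i + 1) + g i * f (i + 1))

theorem adjForm_add (N : ℕ) (f g : ℕ → R) :
    adjForm N (f + g) = adjForm N f + adjForm N g + adjPolar N f g := by
  simp only [adjForm, adjPolar, ← sum_add_distrib, Pi.add_apply]
  exact sum_congr rfl fun i _ => by ring

theorem adjPolar_comm (N : ℕ) (f g : ℕ → R) : adjPolar N f g = adjPolar N g f :=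
  sum_congr rfl fun _ _ => add_comm _ _

theorem adjPolar_add_right (N : ℕ) (f g h : ℕ → R) :
    adjPolar N f (g + h) = adjPolar N f g + adjPolar N f h := by
  simp only [adjPolar, ← sum_add_distrib, Pi.add_apply]
  exact sum_congr rfl fun i _ => by ring

theorem adjPolar_sum_right {ι : Type*} (N : ℕ) (f : ℕ → R) (F : Finset ι) (g : ι → ℕ → R) :
    adjPolar N f (∑ n ∈ F, g n) = ∑ n ∈ F, adjPolar N f (g n) := by
  simp only [adjPolar, Finset.sum_apply, mul_sum, sum_mul, ← sum_add_distrib]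
  exact sum_comm

theorem adjPolar_congr_right (hg : ∀ i ≤ N, g i = h i) : adjPolar N f g = adjPolar N f h :=
  sum_congr rfl fun i hi => by
    rw [hg i (mem_range.1 hi).le, hg (i + 1) (mem_range.1 hi)]

theorem adjForm_eq_of_vanish (hf : ∀ i ≥ M, f i = 0) (hMN : M ≤ N) :
    adjForm N f = adjForm M f :=
  eventually_constant_sum (fun i hi => by rw [hf i hi, zero_mul]) hMN

theorem adjPolar_eq_of_vanish_left (hf : ∀ i ≥ M, f i = 0) (hMN : M ≤ N) :
    adjPolar N f g = adjPolar M f g :=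
  eventually_constant_sum (fun i hi => by rw [hf i hi, hf (i + 1) (by omega)]; ring) hMN

variable [CharP R 2]

theorem adjPolar_self (N : ℕ) (f : ℕ → R) : adjPolar N f f = 0 :=
  sum_eq_zero fun _ _ => CharTwo.add_self_eq_zero _

theorem adjPolar_one_right (N : ℕ) (f : ℕ → R) : adjPolar N f 1 = f 0 + f N := by
  rw [add_comm, ← CharTwo.sub_eq_add, ← sum_range_sub]
  exact sum_congr rfl fun i _ => by
    simp only [CharTwo.sub_eq_add, Pi.one_apply, mul_one, one_mul, add_comm]

theorem adjForm_add_add (N : ℕ) (f g h : ℕ → R) :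
    adjForm N (f + g + h) = adjForm N (f + g) + adjForm N (f + h) + adjForm N (g + h)
      + adjForm N f + adjForm N g + adjForm N h := by
  simp only [adjForm, ← sum_add_distrib, Pi.add_apply]
  refine sum_congr rfl fun i _ => ?_
  linear_combination (-(f i * f (i + 1) + g i * g (i + 1) + h i * h (i + 1))) *
    CharTwo.two_eq_zero (R := R)

end AdjacencyForm

section DisjointFamily

variable {W : ℕ → Set ℕ}

theorem finite_setOf_exists_le_mem (hW : Pairwise (Disjoint on W)) (N : ℕ) :
    {n | ∃ i ≤ N, i ∈ W n}.Finite := by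
  have hsub : {n | ∃ i ≤ N, i ∈ W n} = ⋃ i ∈ Set.Iic N, {n | i ∈ W n} := by
    ext n; simp
  rw [hsub]
  refine (Set.finite_Iic N).biUnion fun i _ => Set.Subsingleton.finite ?_
  intro m hm n hn
  by_contra hmn
  exact Set.disjoint_left.1 (hW hmn) hm hn

theorem sum_indicator_apply_eq_indicator_iUnion {R : Type*} [AddCommMonoid R] {f : ℕ → R}
    (hW : Pairwise (Disjoint on W)) {N : ℕ} {F : Finset ℕ} (hF : {n | ∃ i ≤ N, i ∈ W n} ⊆ F)
    {i : ℕ} (hi : i ≤ N) : ∑ n ∈ F, (W n).indicator f i = (⋃ n, W n).indicator f i := by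
  rw [← Finset.indicator_biUnion_apply F W fun m _ n _ hmn => hW hmn]
  by_cases hmem : i ∈ ⋃ n, W n
  · obtain ⟨n, hn⟩ := Set.mem_iUnion.1 hmem
    have hnF : n ∈ F := hF ⟨i, hi, hn⟩
    rw [Set.indicator_of_mem hmem, Set.indicator_of_mem (Set.mem_iUnion₂.2 ⟨n, hnF, hn⟩)]
  · rw [Set.indicator_of_notMem hmem, Set.indicator_of_notMem]
    exact fun h => hmem (Set.iUnion₂_subset_iUnion _ W h)

theorem indicator_compl_iUnion_add_sum_indicator_apply {R : Type*} [Ring R]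
    (hW : Pairwise (Disjoint on W)) {N : ℕ} {F : Finset ℕ} (hF : {n | ∃ i ≤ N, i ∈ W n} ⊆ F)
    {i : ℕ} (hi : i ≤ N) :
    ((⋃ n, W n)ᶜ.indicator 1 + ∑ n ∈ F, (W n).indicator 1 : ℕ → R) i = 1 := by
  rw [Pi.add_apply, Finset.sum_apply, sum_indicator_apply_eq_indicator_iUnion hW hF hi,
    Set.indicator_compl, Pi.sub_apply, sub_add_cancel, Pi.one_apply]

/-- On an initial segment the gap set `(⋃ n, W n)ᶜ` and the finitely many blocks meeting it sum to
`1`. As `W m` pairs to `0` with itself and with every other block, its pairing with the gap set is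
its pairing with `1`, i.e. its boundary. -/
theorem adjPolar_indicator_compl_iUnion (hW : Pairwise (Disjoint on W)) {m : ℕ}
    (hm : (W m).Finite)
    (hcross : ∀ n ≠ m, ∀ᶠ N in atTop,
      adjPolar N ((W m).indicator (1 : ℕ → ZMod 2)) ((W n).indicator 1) = 0)
    {G : ℕ} (hG : ∀ i ≥ G, i ∈ ⋃ n, W n) :
    adjPolar G ((W m).indicator (1 : ℕ → ZMod 2)) ((⋃ n, W n)ᶜ.indicator 1) =
      (W m).indicator 1 0 := by
  set e : ℕ → ℕ → ZMod 2 := fun n => (W n).indicator 1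
  set g : ℕ → ZMod 2 := (⋃ n, W n)ᶜ.indicator 1
  obtain ⟨B, hB⟩ := hm.bddAbove
  have he : ∀ i ≥ B + 1, e m i = 0 := fun i hi =>
    Set.indicator_of_notMem (fun h => by have := hB h; omega) _
  have hg : ∀ i ≥ G, g i = 0 := fun i hi => Set.indicator_of_notMem (not_not.2 (hG i hi)) _
  have hcross_ge : ∀ n ≠ m, ∀ N ≥ B + 1, adjPolar N (e m) (e n) = 0 := by
    intro n hn N hN
    obtain ⟨N₀, hN₀⟩ := (hcross n hn).exists_forall_of_atTop
    rw [adjPolar_eq_of_vanish_left he hN, ← adjPolar_eq_of_vanish_left he (le_max_left _ N₀)]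
    exact hN₀ _ (le_max_right _ _)
  set N := max G (B + 1)
  set F := insert m (finite_setOf_exists_le_mem hW N).toFinset
  have hpart : ∀ i ≤ N, (g + ∑ n ∈ F, e n) i = (1 : ℕ → ZMod 2) i := fun i hi =>
    indicator_compl_iUnion_add_sum_indicator_apply hW (by simp [F]) hi
  calc adjPolar G (e m) g = adjPolar N (e m) g := by
        rw [adjPolar_comm, adjPolar_comm N]
        exact (adjPolar_eq_of_vanish_left hg (le_max_left _ _)).symm
    _ = adjPolar N (e m) g + ∑ n ∈ F, adjPolar N (e m) (e n) := by
        rw [sum_eq_zero fun n _ => ?_, add_zero]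
        rcases eq_or_ne n m with rfl | hn
        · exact adjPolar_self _ _
        · exact hcross_ge n hn N (le_max_right _ _)
    _ = adjPolar N (e m) 1 := by
        rw [← adjPolar_sum_right, ← adjPolar_add_right, adjPolar_congr_right hpart]
    _ = e m 0 := by rw [adjPolar_one_right, he N (le_max_right _ _), add_zero]

theorem infinite_compl_iUnion_of_adjPolar_eventually_eq_zero (hW : Pairwise (Disjoint on W))
    (hfin : ∀ n, (W n).Finite)
    (hcross : ∀ m n, m ≠ n → ∀ᶠ N in atTop,
      adjPolar N ((W m).indicator (1 : ℕ → ZMod 2)) ((W n).indicator 1) = 0) :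
    (⋃ n, W n)ᶜ.Infinite := by
  intro hcofin
  set e : ℕ → ℕ → ZMod 2 := fun n => (W n).indicator 1
  set g : ℕ → ZMod 2 := (⋃ n, W n)ᶜ.indicator 1
  obtain ⟨B, hB⟩ := hcofin.bddAbove
  have hG : ∀ i ≥ B + 1, i ∈ ⋃ n, W n := fun i hi => not_not.1 fun h => by
    have := hB h; omega
  have hg : g (B + 1) = 0 := Set.indicator_of_notMem (not_not.2 (hG _ le_rfl)) _
  set F := (finite_setOf_exists_le_mem hW (B + 1)).toFinset
  have hpart : ∀ i ≤ B + 1, (g + ∑ n ∈ F, e n) i = (1 : ℕ → ZMod 2) i := fun i hi =>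
    indicator_compl_iUnion_add_sum_indicator_apply hW (by simp [F]) hi
  have : (1 : ZMod 2) = 0 := calc
    1 = g 0 + ∑ n ∈ F, e n 0 := by
        rw [← Finset.sum_apply, ← Pi.add_apply, hpart 0 (Nat.zero_le _), Pi.one_apply]
    _ = g 0 + ∑ n ∈ F, adjPolar (B + 1) (e n) g := by
        rw [sum_congr rfl fun n _ =>
          adjPolar_indicator_compl_iUnion hW (hfin n) (fun k hk => hcross n k hk.symm) hG]
    _ = g 0 + adjPolar (B + 1) g (g + ∑ n ∈ F, e n) := by
        rw [adjPolar_add_right, adjPolar_self, zero_add, adjPolar_sum_right]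
        simp only [adjPolar_comm (B + 1) g]
    _ = g 0 + adjPolar (B + 1) g 1 := by rw [adjPolar_congr_right hpart]
    _ = 0 := by rw [adjPolar_one_right, hg, add_zero, CharTwo.add_self_eq_zero]
  exact one_ne_zero this

end DisjointFamily

section UnionUltrafilter

variable {ℓ : ℕ → ℕ} {s : ℕ → FF}

noncomputable def adjParity (ℓ : ℕ → ℕ) (v : FF) : ZMod 2 :=
  adjForm (v.1.sup id + 1) ((ℓ ⁻¹' ↑v.1).indicator 1)

def unionOver (s : ℕ → FF) (t : Finset ℕ) (ht : t.Nonempty) : FF :=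
  ⟨t.biUnion fun i => (s i).1, ht.biUnion fun i _ => (s i).2⟩

theorem unionOver_mem_FU (s : ℕ → FF) {t : Finset ℕ} (ht : t.Nonempty) :
    unionOver s t ht ∈ FU s :=
  ⟨t, ht, rfl⟩

theorem biUnion_FU_subset_iUnion (s : ℕ → FF) :
    ⋃ v ∈ FU s, ((v : FF).1 : Set ℕ) ⊆ ⋃ n, ((s n).1 : Set ℕ) := by
  simp only [Set.iUnion_subset_iff]
  rintro v ⟨t, -, hv⟩ x hx
  rw [hv, Finset.coe_biUnion] at hx
  obtain ⟨n, -, hn⟩ := Set.mem_iUnion₂.1 hx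
  exact Set.mem_iUnion.2 ⟨n, hn⟩

theorem indicator_preimage_eq_zero (hℓ : StrictMono ℓ) {v : Finset ℕ} {i : ℕ}
    (hi : v.sup id < i) : (ℓ ⁻¹' ↑v).indicator (1 : ℕ → ZMod 2) i = 0 :=
  Set.indicator_of_notMem (s := ℓ ⁻¹' ↑v)
    (fun h => lt_irrefl _ (hi.trans_le ((hℓ.id_le i).trans (le_sup (f := id) h)))) _

theorem adjParity_unionOver (hℓ : StrictMono ℓ) (hdisj : ∀ i j, i ≠ j → Disjoint (s i).1 (s j).1)
    {t : Finset ℕ} (ht : t.Nonempty) {N : ℕ} (hN : ∀ i ∈ t, (s i).1.sup id < N) :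
    adjParity ℓ (unionOver s t ht) = adjForm N (∑ i ∈ t, (ℓ ⁻¹' ↑(s i).1).indicator 1) := by
  have hsup : (unionOver s t ht).1.sup id < N := by
    obtain ⟨i, hi⟩ := ht
    change (t.biUnion fun i => (s i).1).sup id < N
    rw [sup_biUnion, Finset.sup_lt_iff (bot_le.trans_lt (hN i hi))]
    exact hN
  have hunion : ℓ ⁻¹' ↑(unionOver s t ht).1 = ⋃ i ∈ t, ℓ ⁻¹' ↑(s i).1 := by
    simp [unionOver]
  rw [adjParity, ← adjForm_eq_of_vanish (fun i hi => indicator_preimage_eq_zero hℓ (by omega))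
    (Nat.succ_le_of_lt hsup), hunion, Finset.indicator_biUnion]
  · congr 1
    ext j
    rw [Finset.sum_apply]
  · exact fun i _ j _ hij => (Finset.disjoint_coe.2 (hdisj i j hij)).preimage ℓ

theorem adjForm_sum_of_FU_subset (hℓ : StrictMono ℓ)
    (hdisj : ∀ i j, i ≠ j → Disjoint (s i).1 (s j).1) {P : ZMod 2 → Prop}
    (hsub : FU s ⊆ {v | P (adjParity ℓ v)}) {t : Finset ℕ} (ht : t.Nonempty) {N : ℕ}
    (hN : ∀ i ∈ t, (s i).1.sup id < N) :
    P (adjForm N (∑ i ∈ t, (ℓ ⁻¹' ↑(s i).1).indicator 1)) := by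
  rw [← adjParity_unionOver hℓ hdisj ht hN]
  exact hsub (unionOver_mem_FU s ht)

theorem UnionUF.adjParity_eq_zero_mem {u : Ultrafilter FF} (hu : UnionUF u) (hℓ : StrictMono ℓ) :
    {v | adjParity ℓ v = 0} ∈ u := by
  by_contra hnot
  obtain ⟨s, hdisj, hsub, -⟩ := hu _ (Ultrafilter.compl_mem_iff_notMem.2 hnot)
  set e : ℕ → ℕ → ZMod 2 := fun i => (ℓ ⁻¹' ↑(s i).1).indicator 1
  set N := (s 0).1.sup id + (s 1).1.sup id + (s 2).1.sup id + 1
  have hone : ∀ t ⊆ ({0, 1, 2} : Finset ℕ), t.Nonempty → adjForm N (∑ i ∈ t, e i) = 1 := by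
    refine fun t htsub ht => Fin.eq_one_of_ne_zero _
      (adjForm_sum_of_FU_subset (P := (· ≠ 0)) hℓ hdisj hsub ht fun i hi => ?_)
    have := htsub hi
    simp only [mem_insert, mem_singleton] at this
    rcases this with rfl | rfl | rfl <;> omega
  have h := adjForm_add_add N (e 0) (e 1) (e 2)
  rw [show e 0 + e 1 + e 2 = ∑ i ∈ {0, 1, 2}, e i by simp [add_assoc],
    show e 0 + e 1 = ∑ i ∈ {0, 1}, e i by simp, show e 0 + e 2 = ∑ i ∈ {0, 2}, e i by simp,
    show e 1 + e 2 = ∑ i ∈ {1, 2}, e i by simp, ← sum_singleton e 0, ← sum_singleton e 1,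
    ← sum_singleton e 2] at h
  rw [hone _ (by simp) (by simp), hone {0, 1} (by simp) (by simp), hone {0, 2} (by simp) (by simp),
    hone {1, 2} (by simp) (by simp), hone {0} (by simp) (by simp), hone {1} (by simp) (by simp),
    hone {2} (by simp) (by simp)] at h
  exact absurd h (by decide)

theorem adjPolar_eventually_eq_zero_of_FU_subset (hℓ : StrictMono ℓ)
    (hdisj : ∀ i j, i ≠ j → Disjoint (s i).1 (s j).1) (hsub : FU s ⊆ {v | adjParity ℓ v = 0})
    {m n : ℕ} (hmn : m ≠ n) :
    ∀ᶠ N in atTop, adjPolar N ((ℓ ⁻¹' ↑(s m).1).indicator (1 : ℕ → ZMod 2))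
      ((ℓ ⁻¹' ↑(s n).1).indicator 1) = 0 := by
  filter_upwards [eventually_gt_atTop ((s m).1.sup id), eventually_gt_atTop ((s n).1.sup id)]
    with N hm hn
  set e : ℕ → ℕ → ZMod 2 := fun i => (ℓ ⁻¹' ↑(s i).1).indicator 1
  have hzero : ∀ t ⊆ ({m, n} : Finset ℕ), t.Nonempty → adjForm N (∑ i ∈ t, e i) = 0 := by
    refine fun t htsub ht =>
      adjForm_sum_of_FU_subset (P := (· = 0)) hℓ hdisj hsub ht fun i hi => ?_
    have := htsub hi
    simp only [mem_insert, mem_singleton] at this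
    rcases this with rfl | rfl <;> assumption
  have h := adjForm_add N (e m) (e n)
  rw [← sum_pair hmn, ← sum_singleton e m, ← sum_singleton e n, hzero _ (by simp) (by simp),
    hzero {m} (by simp) (by simp), hzero {n} (by simp) (by simp)] at h
  simpa using h.symm

end UnionUltrafilter

/-- Every union ultrafilter is special. -/
theorem unionUF_special (u : Ultrafilter FF) (hu : UnionUF u) :
    ∀ L : Set ℕ, L.Infinite →
      ∃ X ∈ u, (L \ ⋃ v ∈ X, ((v : FF).1 : Set ℕ)).Infinite := by
  intro L hL
  set ℓ : ℕ → ℕ := Nat.nth (· ∈ L)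
  have hℓ : StrictMono ℓ := Nat.nth_strictMono hL
  obtain ⟨s, hdisj, hsub, hs⟩ := hu _ (hu.adjParity_eq_zero_mem hℓ)
  have hgaps := infinite_compl_iUnion_of_adjPolar_eventually_eq_zero
    (W := fun n => ℓ ⁻¹' ↑(s n).1)
    (fun m n hmn => (Finset.disjoint_coe.2 (hdisj m n hmn)).preimage _)
    (fun n => (s n).1.finite_toSet.preimage hℓ.injective.injOn)
    (fun m n hmn => adjPolar_eventually_eq_zero_of_FU_subset hℓ hdisj hsub hmn)
  refine ⟨FU s, hs, (hgaps.image hℓ.injective.injOn).mono ?_⟩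
  rintro _ ⟨i, hi, rfl⟩
  refine ⟨Nat.nth_mem_of_infinite hL i, fun h => hi ?_⟩
  obtain ⟨n, hn⟩ := Set.mem_iUnion.1 (biUnion_FU_subset_iUnion s h)
  exact Set.mem_iUnion.2 ⟨n, hn⟩
end

section
/- A strongly summable ultrafilter p on ℕ with disjoint α-support is α-special: there exists a sequence x with sufficient growth, disjoint α-support and FS(x) ∈ p such that for every infinite L ⊆ ℕ there is a condensation y of x with FS(y) ∈ p and L \ αsupp(y) infinite, where αsupp(y) := ⋃_n αsupp(y_n). -/
/-- The `i`-th digit of `n` in the representation induced by the divisible sequence `a`. -/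
def alphaDigit (a : ℕ → ℕ) (n i : ℕ) : ℕ := (n / a i) % (a (i + 1) / a i)

/-- The `α`-support of `n`: the set of indices with nonzero digit. -/
def asupp (a : ℕ → ℕ) (n : ℕ) : Set ℕ := {i | alphaDigit a n i ≠ 0}

/-- A sequence `x` has disjoint `α`-support. -/
def DisjointAlphaSupport (a : ℕ → ℕ) (x : ℕ → ℕ) : Prop :=
  ∀ i j, i ≠ j → Disjoint (asupp a (x i)) (asupp a (x j))

open Finset Function

section AlphaDigits

variable {a : ℕ → ℕ}

lemma mod_succ_eq_alphaDigit_mul_add {i : ℕ} (hadvd : a i ∣ a (i + 1)) (hpos : 0 < a i) (n : ℕ) :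
    n % a (i + 1) = alphaDigit a n i * a i + n % a i := by
  obtain ⟨b, hb⟩ := hadvd
  have hdiv : a (i + 1) / a i = b := by rw [hb, Nat.mul_div_cancel_left _ hpos]
  rw [alphaDigit, hdiv, ← Nat.mod_mul_right_div_self, ← hb, ← Nat.mod_mod_of_dvd n ⟨b, hb⟩]
  exact (Nat.div_add_mod' _ _).symm

lemma alphaDigit_lt {i : ℕ} (hadvd : a i ∣ a (i + 1)) (hpos : 0 < a (i + 1)) (n : ℕ) :
    alphaDigit a n i < a (i + 1) / a i :=
  Nat.mod_lt _ (Nat.div_pos (Nat.le_of_dvd hpos hadvd) (Nat.pos_of_dvd_of_pos hadvd hpos))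

lemma mod_add_mod_lt_of_disjoint (ha0 : a 0 = 1) (hadvd : ∀ i, a i ∣ a (i + 1))
    (hpos : ∀ i, 0 < a i) {u v : ℕ} (h : Disjoint (asupp a u) (asupp a v)) (k : ℕ) :
    u % a k + v % a k < a k := by
  induction k with
  | zero => simp [ha0, Nat.mod_one]
  | succ k ih =>
    have hzero : alphaDigit a u k = 0 ∨ alphaDigit a v k = 0 := by
      by_contra! hk
      exact Set.disjoint_left.mp h hk.1 hk.2
    have hu := alphaDigit_lt (hadvd k) (hpos (k + 1)) u
    have hv := alphaDigit_lt (hadvd k) (hpos (k + 1)) v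
    have hsum : alphaDigit a u k + alphaDigit a v k + 1 ≤ a (k + 1) / a k := by omega
    rw [mod_succ_eq_alphaDigit_mul_add (hadvd k) (hpos k),
      mod_succ_eq_alphaDigit_mul_add (hadvd k) (hpos k)]
    calc alphaDigit a u k * a k + u % a k + (alphaDigit a v k * a k + v % a k)
        < (alphaDigit a u k + alphaDigit a v k + 1) * a k := by nlinarith
      _ ≤ a (k + 1) / a k * a k := Nat.mul_le_mul_right _ hsum
      _ = a (k + 1) := Nat.div_mul_cancel (hadvd k)

lemma asupp_add (ha0 : a 0 = 1) (hadvd : ∀ i, a i ∣ a (i + 1)) (hpos : ∀ i, 0 < a i)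
    {u v : ℕ} (h : Disjoint (asupp a u) (asupp a v)) :
    asupp a (u + v) = asupp a u ∪ asupp a v := by
  have hmod k : (u + v) % a k = u % a k + v % a k :=
    Nat.add_mod_of_add_mod_lt (mod_add_mod_lt_of_disjoint ha0 hadvd hpos h k)
  have hdigit i : alphaDigit a (u + v) i = alphaDigit a u i + alphaDigit a v i := by
    have h1 := mod_succ_eq_alphaDigit_mul_add (hadvd i) (hpos i) (u + v)
    have h2 := mod_succ_eq_alphaDigit_mul_add (hadvd i) (hpos i) u
    have h3 := mod_succ_eq_alphaDigit_mul_add (hadvd i) (hpos i) v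
    rw [hmod, hmod] at h1
    exact Nat.eq_of_mul_eq_mul_right (hpos i) (by rw [add_mul]; omega)
  ext i
  simp only [asupp, Set.mem_ofPred_eq, Set.mem_union, hdigit]
  omega

lemma asupp_zero : asupp a 0 = ∅ := by
  simp [asupp, alphaDigit]

lemma asupp_finite (hmono : StrictMono a) (n : ℕ) : (asupp a n).Finite :=
  (Set.finite_Iic n).subset fun i hi => not_lt.mp fun hni => hi <| by
    rw [alphaDigit, Nat.div_eq_of_lt (hni.trans_le (hmono.id_le i)), Nat.zero_mod]

lemma asupp_sum (ha0 : a 0 = 1) (hadvd : ∀ i, a i ∣ a (i + 1)) (hpos : ∀ i, 0 < a i)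
    {x : ℕ → ℕ} (hx : DisjointAlphaSupport a x) (s : Finset ℕ) :
    asupp a (∑ i ∈ s, x i) = ⋃ i ∈ s, asupp a (x i) := by
  classical
  induction s using Finset.induction_on with
  | empty => simp [asupp_zero]
  | insert m s hm ih =>
    have hdisj : Disjoint (asupp a (x m)) (asupp a (∑ i ∈ s, x i)) := by
      rw [ih, Set.disjoint_iUnion₂_right]
      exact fun i hi => hx m i (ne_of_mem_of_not_mem hi hm).symm
    rw [sum_insert hm, asupp_add ha0 hadvd hpos hdisj, ih, set_biUnion_insert]

end AlphaDigits

lemma mem_FS (x : ℕ → ℕ) (i : ℕ) : x i ∈ FS x :=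
  ⟨{i}, singleton_nonempty i, sum_singleton _ _⟩

lemma add_mem_FS (x : ℕ → ℕ) {i j : ℕ} (hij : i ≠ j) : x i + x j ∈ FS x :=
  ⟨{i, j}, insert_nonempty _ _, sum_pair hij⟩

namespace SufficientGrowth

variable {x : ℕ → ℕ}

lemma sum_mul_lt (hx : SufficientGrowth x) {c : ℕ → ℕ} (hc : ∀ i, c i ≤ 4) (n : ℕ) :
    ∑ i ∈ range n, c i * x i < x n :=
  calc ∑ i ∈ range n, c i * x i ≤ ∑ i ∈ range n, 4 * x i :=
        sum_le_sum fun i _ => Nat.mul_le_mul_right _ (hc i)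
    _ = 4 * ∑ i ∈ range n, x i := (mul_sum _ _ _).symm
    _ < x n := hx n

lemma le_of_sum_range_succ_eq (hx : SufficientGrowth x) {c d : ℕ → ℕ} (hc : ∀ i, c i ≤ 4) {n : ℕ}
    (h : ∑ i ∈ range (n + 1), c i * x i = ∑ i ∈ range (n + 1), d i * x i) : d n ≤ c n := by
  by_contra! hlt
  rw [sum_range_succ, sum_range_succ] at h
  have hlow := hx.sum_mul_lt hc n
  have htop : c n * x n + x n ≤ d n * x n := add_one_mul (c n) (x n) ▸ Nat.mul_le_mul_right _ hlt
  linarith [Nat.zero_le (∑ i ∈ range n, d i * x i)]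

lemma eq_of_sum_range_eq (hx : SufficientGrowth x) {c d : ℕ → ℕ} (hc : ∀ i, c i ≤ 4)
    (hd : ∀ i, d i ≤ 4) {n : ℕ}
    (h : ∑ i ∈ range n, c i * x i = ∑ i ∈ range n, d i * x i) : ∀ i < n, c i = d i := by
  induction n with
  | zero => simp
  | succ n ih =>
    have hn : c n = d n :=
      le_antisymm (hx.le_of_sum_range_succ_eq hd h.symm) (hx.le_of_sum_range_succ_eq hc h)
    rw [sum_range_succ, sum_range_succ, hn, add_left_inj] at h
    intro i hi
    rcases Nat.lt_succ_iff_lt_or_eq.mp hi with hi | rfl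
    exacts [ih h i hi, hn]

lemma disjoint_of_sum_add_sum_eq (hx : SufficientGrowth x) {s t u : Finset ℕ}
    (h : ∑ i ∈ s, x i + ∑ i ∈ t, x i = ∑ i ∈ u, x i) : Disjoint s t := by
  classical
  obtain ⟨n, hn⟩ := (s ∪ t ∪ u).exists_nat_subset_range
  have hsum {v : Finset ℕ} (hv : v ⊆ range n) :
      ∑ i ∈ range n, (if i ∈ v then 1 else 0) * x i = ∑ i ∈ v, x i := by
    simp [ite_mul, sum_ite_mem, inter_eq_right.mpr hv]
  have hcoeff := hx.eq_of_sum_range_eq (n := n)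
    (c := fun i => (if i ∈ s then 1 else 0) + (if i ∈ t then 1 else 0))
    (d := fun i => if i ∈ u then 1 else 0) (fun i => by split_ifs <;> simp)
    (fun i => by split_ifs <;> simp)
    (by simp only [add_mul, sum_add_distrib]
        rw [hsum (by grind), hsum (by grind), hsum (by grind), h])
  refine disjoint_left.mpr fun i his hit => ?_
  have := hcoeff i (mem_range.mp (hn (by simp [his])))
  simp only [his, hit, if_true] at this
  split_ifs at this
  omega

end SufficientGrowth

lemma disjoint_asupp_of_mem_FS {a x : ℕ → ℕ} (ha0 : a 0 = 1) (hadvd : ∀ i, a i ∣ a (i + 1))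
    (hpos : ∀ i, 0 < a i) (hg : SufficientGrowth x) (hx : DisjointAlphaSupport a x) {u v : ℕ}
    (hu : u ∈ FS x) (hv : v ∈ FS x) (huv : u + v ∈ FS x) :
    Disjoint (asupp a u) (asupp a v) := by
  obtain ⟨s, -, rfl⟩ := hu
  obtain ⟨t, -, rfl⟩ := hv
  obtain ⟨w, -, hw⟩ := huv
  have hst := hg.disjoint_of_sum_add_sum_eq hw.symm
  rw [asupp_sum ha0 hadvd hpos hx, asupp_sum ha0 hadvd hpos hx, Set.disjoint_iUnion₂_left]
  intro i hi
  rw [Set.disjoint_iUnion₂_right]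
  exact fun j hj => hx i j fun hij => disjoint_left.mp hst hi (hij ▸ hj)

section SuccPairs

def succPairs (S T : Finset ℕ) : ℕ := #{d ∈ S | d + 1 ∈ T}

def adjPairs (S T : Finset ℕ) : ℕ := succPairs S T + succPairs T S

lemma succPairs_union_left {S S' : Finset ℕ} (h : Disjoint S S') (T : Finset ℕ) :
    succPairs (S ∪ S') T = succPairs S T + succPairs S' T := by
  rw [succPairs, filter_union, card_union_of_disjoint (disjoint_filter_filter h)]
  rfl

lemma succPairs_union_right (S : Finset ℕ) {T T' : Finset ℕ} (h : Disjoint T T') :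
    succPairs S (T ∪ T') = succPairs S T + succPairs S T' := by
  simp_rw [succPairs, mem_union, filter_or]
  exact card_union_of_disjoint (disjoint_filter.mpr fun d _ hT hT' => disjoint_left.mp h hT hT')

lemma succPairs_union_union {S T : Finset ℕ} (h : Disjoint S T) :
    succPairs (S ∪ T) (S ∪ T) = succPairs S S + succPairs T T + adjPairs S T := by
  rw [succPairs_union_left h, succPairs_union_right _ h, succPairs_union_right _ h, adjPairs]
  ring

variable {ι : Type*} {T : ι → Finset ℕ}

lemma succPairs_biUnion_left {J : Finset ι} (hT : (J : Set ι).PairwiseDisjoint T)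
    (S : Finset ℕ) : succPairs (J.biUnion T) S = ∑ n ∈ J, succPairs (T n) S := by
  rw [succPairs, filter_biUnion, card_biUnion]
  · rfl
  · exact hT.mono fun n => filter_subset _ _

lemma succPairs_biUnion_right (S : Finset ℕ) {K : Finset ι}
    (hT : (K : Set ι).PairwiseDisjoint T) :
    succPairs S (K.biUnion T) = ∑ m ∈ K, succPairs S (T m) := by
  have : {d ∈ S | d + 1 ∈ K.biUnion T} = K.biUnion fun m => {d ∈ S | d + 1 ∈ T m} := by
    ext d
    simp only [mem_filter, mem_biUnion]
    grind
  rw [succPairs, this, card_biUnion]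
  · rfl
  · exact fun m hm n hn hmn => disjoint_filter.mpr fun d _ hdm hdn =>
      disjoint_left.mp (hT hm hn hmn) hdm hdn

lemma even_adjPairs_biUnion (hT : Pairwise (Disjoint on T))
    (heven : Pairwise fun i j => Even (adjPairs (T i) (T j))) (J K : Finset ι) :
    Even (adjPairs (J.biUnion T) (K.biUnion T)) := by
  rw [adjPairs, succPairs_biUnion_left (hT.set_pairwise _),
    succPairs_biUnion_left (hT.set_pairwise _)]
  simp_rw [succPairs_biUnion_right _ (hT.set_pairwise _)]
  rw [sum_comm (s := K), ← sum_add_distrib]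
  refine even_sum _ fun n _ => ?_
  rw [← sum_add_distrib]
  refine even_sum _ fun m _ => ?_
  obtain rfl | hnm := eq_or_ne n m
  · exact ⟨_, rfl⟩
  · exact heven hnm

lemma finite_setOf_adjPairs_ne_zero (hT : Pairwise (Disjoint on T)) (i : ι) :
    {j | adjPairs (T i) (T j) ≠ 0}.Finite := by
  have hsub : {j | adjPairs (T i) (T j) ≠ 0} ⊆
      ⋃ e ∈ (T i).image (· + 1) ∪ (T i).image (· - 1), {j | e ∈ T j} := by
    intro j hj
    have : 0 < succPairs (T i) (T j) ∨ 0 < succPairs (T j) (T i) := by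
      simp only [Set.mem_ofPred_eq, adjPairs] at hj
      omega
    simp only [succPairs, card_pos, filter_nonempty_iff] at this
    simp only [Set.mem_iUnion, mem_union, mem_image, Set.mem_ofPred_eq]
    rcases this with ⟨d, hd, hdj⟩ | ⟨d, hd, hdi⟩
    · exact ⟨d + 1, Or.inl ⟨d, hd, rfl⟩, hdj⟩
    · exact ⟨d, Or.inr ⟨d + 1, hdi, rfl⟩, hd⟩
  refine Set.Finite.subset (Set.Finite.biUnion (finite_toSet _) fun e _ => ?_) hsub
  exact Set.Subsingleton.finite fun j hj k hk => hT.eq (not_disjoint_iff.mpr ⟨e, hj, hk⟩)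

end SuccPairs

lemma succPairs_cast_eq_sum {S T : Finset ℕ} {R : ℕ} (h : ∀ d ∈ S, d + 1 ∈ T → d < R) :
    (succPairs S T : ZMod 2) =
      ∑ d ∈ range R, (if d ∈ S then 1 else 0) * (if d + 1 ∈ T then 1 else 0) := by
  have : {d ∈ S | d + 1 ∈ T} = {d ∈ range R | d ∈ S ∧ d + 1 ∈ T} := by
    ext d
    simp only [mem_filter, mem_range]
    grind
  simp_rw [succPairs, this, natCast_card_filter, ite_zero_mul_ite_zero, mul_one]

/-- Modulo `2`, the pairs `{d, d + 1}` inside `U` count twice and the remaining ones are the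
boundary points of `U` in `[N, R]`, of which there is an odd number as `N ∈ U` and `R ∉ U`. -/
lemma odd_adjPairs {U W : Finset ℕ} {N R : ℕ} (hUW : U ⊆ W) (hN : N ∈ U) (hUR : U ⊆ range R)
    (hlow : ∀ d ∈ W, d ≤ N → d ∈ U) (hhigh : ∀ d, N ≤ d → d ≤ R → d ∈ W) :
    Odd (adjPairs U W) := by
  set χ : Finset ℕ → ℕ → ZMod 2 := fun S d => if d ∈ S then 1 else 0
  have hR d (hd : d ∈ U) : d < R := mem_range.mp (hUR hd)
  have hNR : N ≤ R := (hR N hN).le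
  have hsplit : (adjPairs U W : ZMod 2) =
      ∑ d ∈ range R, (χ U d * χ W (d + 1) + χ W d * χ U (d + 1)) := by
    rw [adjPairs, Nat.cast_add, succPairs_cast_eq_sum fun d hd _ => hR d hd,
      succPairs_cast_eq_sum fun d _ hd => Nat.lt_of_succ_lt (hR _ hd), sum_add_distrib]
  have hbelow : ∀ d ∈ range N, χ U d * χ W (d + 1) + χ W d * χ U (d + 1) = 0 := by
    intro d hd
    have hχ e (he : e ≤ N) : χ U e = χ W e := by
      simp only [χ]
      grind
    rw [hχ d (mem_range.mp hd).le, hχ (d + 1) (mem_range.mp hd), CharTwo.add_self_eq_zero]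
  have habove : ∀ d ∈ Ico N R,
      χ U d * χ W (d + 1) + χ W d * χ U (d + 1) = χ U (d + 1) - χ U d := by
    intro d hd
    obtain ⟨hNd, hdR⟩ := mem_Ico.mp hd
    simp only [χ, if_pos (hhigh d hNd hdR.le), if_pos (hhigh (d + 1) (by omega) hdR), mul_one,
      one_mul, CharTwo.sub_eq_add, add_comm]
  rw [← ZMod.natCast_eq_one_iff_odd, hsplit, ← sum_range_add_sum_Ico _ hNR,
    sum_eq_zero hbelow, sum_congr rfl habove, sum_Ico_sub _ hNR]
  have hRU : R ∉ U := fun h => (hR R h).false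
  simp only [χ, if_pos hN, if_neg hRU]
  decide

theorem infinite_compl_iUnion_of_even_adjPairs (T : ℕ → Finset ℕ) (hT : Pairwise (Disjoint on T))
    (heven : Pairwise fun i j => Even (adjPairs (T i) (T j))) :
    (⋃ n, (T n : Set ℕ))ᶜ.Infinite := by
  intro hfin
  obtain ⟨N, hN⟩ := hfin.bddAbove
  have hcover d (hd : N < d) : ∃ n, d ∈ T n := by
    by_contra h
    exact (hN (by simpa using h)).not_gt hd
  set idx : ℕ → ℕ := fun d => Classical.epsilon fun n => d ∈ T n
  have hidx d m (hdm : d ∈ T m) : d ∈ T (idx d) := Classical.epsilon_spec (p := (d ∈ T ·)) ⟨m, hdm⟩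
  have hmem_idx d (hd : N < d) : d ∈ T (idx d) := (hcover d hd).elim (hidx d)
  set U := ((range (N + 2)).image idx).biUnion T
  have hU : N + 1 ∈ U := mem_biUnion.mpr
    ⟨idx (N + 1), mem_image_of_mem idx (mem_range.mpr (by omega)), hmem_idx _ (by omega)⟩
  obtain ⟨R, hR⟩ := U.exists_nat_subset_range
  have hNR : N + 1 < R := mem_range.mp (hR hU)
  set W := ((range (R + 1)).image idx).biUnion T
  have hUW : U ⊆ W := biUnion_subset_biUnion_of_subset_left _
    (image_subset_image (range_subset_range.mpr (by omega)))
  have hlow : ∀ d ∈ W, d ≤ N + 1 → d ∈ U := fun d hd hdN => by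
    obtain ⟨m, -, hdm⟩ := mem_biUnion.mp hd
    exact mem_biUnion.mpr ⟨idx d, mem_image_of_mem idx (mem_range.mpr (by omega)), hidx d m hdm⟩
  have hhigh : ∀ d, N + 1 ≤ d → d ≤ R → d ∈ W := fun d hNd hdR =>
    mem_biUnion.mpr ⟨idx d, mem_image_of_mem idx (mem_range.mpr (by omega)), hmem_idx d (by omega)⟩
  exact Nat.not_even_iff_odd.mpr (odd_adjPairs hUW hU hR hlow hhigh)
    (even_adjPairs_biUnion hT heven _ _)

def IsDisjointUnionOn (B : Set ℕ) (τ : ℕ → Finset ℕ) : Prop :=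
  ∀ u ∈ B, ∀ v ∈ B, u + v ∈ B → Disjoint (τ u) (τ v) ∧ τ (u + v) = τ u ∪ τ v

namespace IsDisjointUnionOn

variable {B : Set ℕ} {τ : ℕ → Finset ℕ} {w : ℕ → ℕ}

lemma pairwise_disjoint (hτ : IsDisjointUnionOn B τ) (hw : FS w ⊆ B) :
    Pairwise (Disjoint on fun n => τ (w n)) := fun _ _ hij =>
  (hτ _ (hw (mem_FS w _)) _ (hw (mem_FS w _)) (hw (add_mem_FS w hij))).1

lemma succPairs_add (hτ : IsDisjointUnionOn B τ) (hw : FS w ⊆ B) {i j : ℕ} (hij : i ≠ j) :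
    succPairs (τ (w i + w j)) (τ (w i + w j)) =
      succPairs (τ (w i)) (τ (w i)) + succPairs (τ (w j)) (τ (w j)) +
        adjPairs (τ (w i)) (τ (w j)) := by
  obtain ⟨hdisj, hunion⟩ := hτ _ (hw (mem_FS w i)) _ (hw (mem_FS w j)) (hw (add_mem_FS w hij))
  rw [hunion, succPairs_union_union hdisj]

end IsDisjointUnionOn

namespace StronglySummable

variable {p : Ultrafilter ℕ} {B : Set ℕ} {τ : ℕ → Finset ℕ}

lemma even_succPairs_mem (hp : StronglySummable p) (hB : B ∈ p)
    (hτ : IsDisjointUnionOn B τ) : {z | Even (succPairs (τ z) (τ z))} ∈ p := by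
  by_contra hE
  obtain ⟨w, -, hwE, -⟩ := hp _ (Filter.inter_mem (Ultrafilter.compl_mem_iff_notMem.mpr hE) hB)
  have hwB : FS w ⊆ B := fun z hz => (hwE hz).2
  have hodd z (hz : z ∈ FS w) : (succPairs (τ z) (τ z)) % 2 = 1 :=
    Nat.odd_iff.mp (Nat.not_even_iff_odd.mp (hwE hz).1)
  have hadj : {j | j ≠ 0} ⊆ {j | adjPairs (τ (w 0)) (τ (w j)) ≠ 0} := by
    intro j hj
    have h := hodd _ (add_mem_FS w (Ne.symm hj))
    rw [hτ.succPairs_add hwB (Ne.symm hj)] at h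
    have := hodd _ (mem_FS w 0)
    have := hodd _ (mem_FS w j)
    simp only [Set.mem_ofPred_eq]
    omega
  exact ((Set.finite_singleton 0).infinite_compl.mono hadj)
    (finite_setOf_adjPairs_ne_zero (hτ.pairwise_disjoint hwB) 0)

theorem exists_FS_subset_compl_iUnion_infinite (hp : StronglySummable p) (hB : B ∈ p)
    (hτ : IsDisjointUnionOn B τ) :
    ∃ y : ℕ → ℕ, FS y ⊆ B ∧ FS y ∈ p ∧ (⋃ n, (τ (y n) : Set ℕ))ᶜ.Infinite := by
  obtain ⟨y, -, hyE, hy⟩ := hp _ (Filter.inter_mem (hp.even_succPairs_mem hB hτ) hB)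
  have hyB : FS y ⊆ B := fun z hz => (hyE hz).2
  have heven z (hz : z ∈ FS y) : (succPairs (τ z) (τ z)) % 2 = 0 := Nat.even_iff.mp (hyE hz).1
  refine ⟨y, hyB, hy, infinite_compl_iUnion_of_even_adjPairs _ (hτ.pairwise_disjoint hyB)
    fun i j hij => Nat.even_iff.mpr ?_⟩
  have h := heven _ (add_mem_FS y hij)
  rw [hτ.succPairs_add hyB hij] at h
  have := heven _ (mem_FS y i)
  have := heven _ (mem_FS y j)
  omega

end StronglySummable

/-- A strongly summable ultrafilter with disjoint `α`-support is `α`-special. -/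
theorem stronglySummable_alpha_special (a : ℕ → ℕ)
    (ha0 : a 0 = 1) (hadvd : ∀ n, a n ∣ a (n + 1)) (hamono : ∀ n, a n < a (n + 1))
    (p : Ultrafilter ℕ) (hp : StronglySummable p)
    (hdisj : ∃ x : ℕ → ℕ, (∀ n, 0 < x n) ∧ SufficientGrowth x ∧
      DisjointAlphaSupport a x ∧ FS x ∈ p) :
    ∃ x : ℕ → ℕ, (∀ n, 0 < x n) ∧ SufficientGrowth x ∧
      DisjointAlphaSupport a x ∧ FS x ∈ p ∧
      ∀ L : Set ℕ, L.Infinite →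
        ∃ y : ℕ → ℕ, FS y ⊆ FS x ∧ FS y ∈ p ∧
          (L \ ⋃ n, asupp a (y n)).Infinite := by
  obtain ⟨x, hxpos, hxg, hxd, hxp⟩ := hdisj
  refine ⟨x, hxpos, hxg, hxd, hxp, fun L hL => ?_⟩
  have hmono : StrictMono a := strictMono_nat_of_lt_succ hamono
  have hpos i : 0 < a i := (hmono.monotone (Nat.zero_le i)).trans_lt' (by omega)
  set e := Nat.nth (· ∈ L)
  have he : Injective e := Nat.nth_injective hL
  have hfin z : (e ⁻¹' asupp a z).Finite := (asupp_finite hmono z).preimage he.injOn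
  have hτ : IsDisjointUnionOn (FS x) fun z => (hfin z).toFinset := by
    intro u hu v hv huv
    have h := disjoint_asupp_of_mem_FS ha0 hadvd hpos hxg hxd hu hv huv
    refine ⟨Set.Finite.disjoint_toFinset.mpr (h.preimage e), ?_⟩
    rw [← Finset.coe_inj]
    simp only [coe_union, Set.Finite.coe_toFinset, asupp_add ha0 hadvd hpos h, Set.preimage_union]
  obtain ⟨y, hyx, hyp, hinf⟩ := hp.exists_FS_subset_compl_iUnion_infinite hxp hτ
  refine ⟨y, hyx, hyp, (hinf.image he.injOn).mono ?_⟩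
  rintro _ ⟨k, hk, rfl⟩
  simp only [Set.Finite.coe_toFinset, Set.compl_iUnion, Set.mem_iInter, Set.mem_compl_iff,
    Set.mem_preimage] at hk
  exact ⟨Nat.nth_mem_of_infinite hL k, by simpa using hk⟩
end

section
/- If p is a strongly summable ultrafilter on ℕ, then the pushforward u of p under the map bmax (sending n > 0 to the maximum of its binary support, and 0 to 0) is a P-point: u is nonprincipal, and for every sequence (A_n)_{n∈ℕ} of elements of u there exists B ∈ u such that B \ A_n is finite for every n. -/
/-- The binary support of `n`. -/
def bsupp (n : ℕ) : Set ℕ := {i | (n / 2 ^ i) % 2 = 1}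

/-- `bmax n`: the maximum of the binary support of `n` (and `0` for `n = 0`). -/
noncomputable def bmax (n : ℕ) : ℕ := sSup (bsupp n)

/-!
Since `bmax = Nat.log 2`, write `log` for it and `v` for the 2-adic valuation. It suffices to treat
a decreasing sequence `A n` in `u`. Colour `m` by its odd part modulo `4`, by its two leading
binary digits, and by whether `log m ∈ A (v m)`, and take `FS x ∈ p` monochromatic. Equal leading
digits mean that adding a comparatively small summand never carries into a new leading digit.

If `log m ∉ A (v m)` throughout `FS x`, then a large `m ∈ FS x` has a partner `m ± x 0 ∈ FS x` with
the same `log`, and one of the two has valuation at most `v (x 0)`; so `log '' FS x ∩ A (v (x 0))`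
is a finite member of `u`, which is impossible. Hence `log m ∈ A (v m)` throughout `FS x`, and
`B = log '' FS x` works: by the odd-part colour each 2-adic level holds at most two of the `x i`,
so only finitely many have valuation `< n`, and a large sum has the same `log` as its part made
of the `x i` of valuation `≥ n`, which lies in `A n`.
-/

theorem bmax_eq_log : bmax = Nat.log 2 := by
  funext m
  rcases eq_or_ne m 0 with rfl | hm
  · simp [bmax, bsupp]
  refine IsGreatest.csSup_eq ⟨?_, fun i hi => ?_⟩
  · have : m / 2 ^ Nat.log 2 m = 1 :=
      Nat.div_eq_of_lt_le (by simpa using Nat.pow_log_le_self 2 hm)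
        (by simpa [pow_succ, mul_comm] using Nat.lt_pow_succ_log_self one_lt_two m)
    simp [bsupp, this]
  · by_contra! hlt
    have : m / 2 ^ i = 0 := Nat.div_eq_of_lt ((Nat.lt_pow_succ_log_self one_lt_two m).trans_le
      (Nat.pow_le_pow_right two_pos hlt))
    simp [bsupp, this] at hi

theorem sum_mem_FS (x : ℕ → ℕ) {s : Finset ℕ} (hs : s.Nonempty) : ∑ i ∈ s, x i ∈ FS x :=
  ⟨s, hs, rfl⟩

theorem infinite_FS {x : ℕ → ℕ} (hx : ∀ i, 0 < x i) : (FS x).Infinite := by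
  refine Set.infinite_of_forall_exists_gt fun a =>
    ⟨_, sum_mem_FS x ⟨0, Finset.mem_range.2 a.succ_pos⟩, ?_⟩
  calc a < (Finset.range (a + 1)).card := by simp
    _ = ∑ _i ∈ Finset.range (a + 1), 1 := by simp
    _ ≤ ∑ i ∈ Finset.range (a + 1), x i := Finset.sum_le_sum fun i _ => hx i

theorem Ultrafilter.exists_eventually_eq_of_forall_lt {α : Type*} (p : Ultrafilter α)
    {f : α → ℕ} {k : ℕ} (hf : ∀ a, f a < k) : ∃ c, ∀ᶠ a in p, f a = c := by
  obtain ⟨c, -, hc⟩ :=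
    (Ultrafilter.eventually_exists_mem_iff (P := fun c a => f a = c) (Set.finite_Iio k)).1
    (Filter.Eventually.of_forall fun a => ⟨f a, hf a, rfl⟩)
  exact ⟨c, hc⟩

theorem StronglySummable.le_cofinite {p : Ultrafilter ℕ} (hp : StronglySummable p) :
    (p : Filter ℕ) ≤ Filter.cofinite := by
  refine p.le_cofinite_or_eq_pure.resolve_right ?_
  rintro ⟨a, rfl⟩
  obtain ⟨x, hx, hsub, -⟩ := hp {a} rfl
  exact infinite_FS hx ((Set.finite_singleton a).subset hsub)

theorem Nat.tendsto_log_atTop {b : ℕ} (hb : 1 < b) :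
    Filter.Tendsto (Nat.log b) Filter.atTop Filter.atTop :=
  Filter.tendsto_atTop_atTop.2 fun n => ⟨b ^ n, fun _ h => Nat.le_log_of_pow_le hb h⟩

theorem StronglySummable.notMem_map_log_of_finite {p : Ultrafilter ℕ} (hp : StronglySummable p)
    {S : Set ℕ} (hS : S.Finite) : S ∉ p.map (Nat.log 2) := by
  have hle : ((p.map (Nat.log 2) : Ultrafilter ℕ) : Filter ℕ) ≤ Filter.cofinite := by
    rw [Ultrafilter.coe_map, Nat.cofinite_eq_atTop]
    exact (Nat.tendsto_log_atTop one_lt_two).comp (Nat.cofinite_eq_atTop ▸ hp.le_cofinite)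
  exact Ultrafilter.compl_mem_iff_notMem.1 (hle hS.compl_mem_cofinite)

/-- The two leading binary digits of `m`; just `m` when `m < 2`. -/
def topTwoBits (m : ℕ) : ℕ := m / 2 ^ (Nat.log 2 m - 1)

theorem topTwoBits_lt_four (m : ℕ) : topTwoBits m < 4 := by
  refine (Nat.div_lt_iff_lt_mul (by positivity)).2
    ((Nat.lt_pow_succ_log_self one_lt_two m).trans_le ?_)
  calc 2 ^ (Nat.log 2 m).succ ≤ 2 ^ (Nat.log 2 m - 1 + 2) := Nat.pow_le_pow_right two_pos (by omega)
    _ = 4 * 2 ^ (Nat.log 2 m - 1) := by ring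

/-- If `l` is much smaller than `l + h`, the leading digit of `l + h` can only differ from that
of `h` through a carry, which would change the two leading digits. -/
theorem log_add_eq_of_topTwoBits_eq {l h : ℕ} (htop : topTwoBits (l + h) = topTwoBits h)
    (hl : Nat.log 2 l + 3 ≤ Nat.log 2 (l + h)) : Nat.log 2 (l + h) = Nat.log 2 h := by
  set L := Nat.log 2 (l + h) with hL
  set c := 2 ^ (L - 2) with hc
  have hc1 : 2 ^ (L - 1) = 2 * c := by rw [hc, ← pow_succ']; congr 1; omega
  have hc2 : 2 ^ L = 4 * c := by rw [hc, show 4 = 2 ^ 2 by rfl, ← pow_add]; congr 1; omega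
  have hlc : l < c := (Nat.lt_pow_succ_log_self one_lt_two l).trans_le
    (Nat.pow_le_pow_right two_pos (by omega))
  have hlh0 : l + h ≠ 0 := by rintro h0; simp [hL, h0] at hl
  have hlo : 4 * c ≤ l + h := hc2 ▸ Nat.pow_log_le_self 2 hlh0
  have hhi : l + h < 2 * (4 * c) := by
    simpa [← hc2, pow_succ, mul_comm] using Nat.lt_pow_succ_log_self one_lt_two (l + h)
  have hlogh : L - 1 ≤ Nat.log 2 h := Nat.le_log_of_pow_le one_lt_two (by omega)
  have hlogh' : Nat.log 2 h ≤ L := Nat.log_mono_right (Nat.le_add_left h l)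
  by_contra hne
  have hlogh_eq : Nat.log 2 h = L - 1 := by omega
  have hh : h < 4 * c := by
    simpa [hlogh_eq, ← hc2, show L - 1 + 1 = L by omega] using Nat.lt_pow_succ_log_self one_lt_two h
  have htop_lh : topTwoBits (l + h) = 2 := by
    rw [topTwoBits, ← hL, hc1]
    exact Nat.div_eq_of_lt_le (by omega) (by omega)
  have htop_h : h / c = 2 := by
    rw [← htop_lh, htop, topTwoBits, hlogh_eq, show L - 1 - 1 = L - 2 by omega]
  have : h < 3 * c := (Nat.div_lt_iff_lt_mul (by positivity)).1 (by omega)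
  omega

section FS

variable {x : ℕ → ℕ} {τ ω : ℕ}

theorem exists_sum_disjoint_log_eq (htop : ∀ m ∈ FS x, topTwoBits m = τ) {m : ℕ} (hm : m ∈ FS x)
    {L : Finset ℕ} (hL : Nat.log 2 (∑ j ∈ L, x j) + 3 ≤ Nat.log 2 m) :
    ∃ t : Finset ℕ, t.Nonempty ∧ Disjoint t L ∧ Nat.log 2 (∑ j ∈ t, x j) = Nat.log 2 m := by
  obtain ⟨s, hs, rfl⟩ := hm
  have hsplit := Finset.sum_inter_add_sum_sdiff s L x
  have hlow : Nat.log 2 (∑ j ∈ s ∩ L, x j) ≤ Nat.log 2 (∑ j ∈ L, x j) :=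
    Nat.log_mono_right (Finset.sum_le_sum_of_subset Finset.inter_subset_right)
  have hne : (s \ L).Nonempty := by
    rw [Finset.nonempty_iff_ne_empty]
    intro he
    rw [he, Finset.sum_empty, add_zero] at hsplit
    rw [← hsplit] at hL
    omega
  refine ⟨s \ L, hne, Finset.sdiff_disjoint, ?_⟩
  rw [← hsplit] at hL ⊢
  refine (log_add_eq_of_topTwoBits_eq ?_ (by omega)).symm
  rw [htop _ (hsplit ▸ sum_mem_FS x hs), htop _ (sum_mem_FS x hne)]

theorem finite_log_image_inter_of_forall_log_notMem {A : ℕ → Set ℕ} (hA : Antitone A)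
    (htop : ∀ m ∈ FS x, topTwoBits m = τ) (hD : ∀ m ∈ FS x, Nat.log 2 m ∉ A (m.factorization 2))
    {i : ℕ} (hi : x i ≠ 0) : (Nat.log 2 '' FS x ∩ A ((x i).factorization 2)).Finite := by
  set N := (x i).factorization 2
  refine (Set.finite_Iio (Nat.log 2 (x i) + 3)).subset ?_
  rintro _ ⟨⟨m, hm, rfl⟩, hmA⟩
  rw [Set.mem_Iio]
  by_contra! hlarge
  obtain ⟨t, ht, hdisj, hlog⟩ :=
    exists_sum_disjoint_log_eq htop hm (L := {i}) (by simpa using hlarge)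
  set h := ∑ j ∈ t, x j
  have hit : i ∉ t := Finset.disjoint_singleton_right.1 hdisj
  have hh : h ∈ FS x := sum_mem_FS x ht
  have hih : x i + h ∈ FS x := by
    simpa [Finset.sum_insert hit] using sum_mem_FS x (Finset.insert_nonempty i t)
  have hlog' : Nat.log 2 (x i + h) = Nat.log 2 h := by
    refine log_add_eq_of_topTwoBits_eq (by rw [htop _ hih, htop _ hh]) ?_
    exact hlarge.trans (hlog ▸ Nat.log_mono_right (Nat.le_add_left h (x i)))
  -- `h` and `x i + h` cannot both be divisible by `2 ^ (N + 1)`, since `x i` is not.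
  obtain ⟨y, hy, hylog, hydvd⟩ : ∃ y ∈ FS x, Nat.log 2 y = Nat.log 2 m ∧ ¬ 2 ^ (N + 1) ∣ y := by
    by_cases hdvd : 2 ^ (N + 1) ∣ h
    · refine ⟨x i + h, hih, hlog'.trans hlog, fun hdvd' => ?_⟩
      exact Nat.pow_succ_factorization_not_dvd hi Nat.prime_two ((Nat.dvd_add_left hdvd).1 hdvd')
    · exact ⟨h, hh, hlog, hdvd⟩
  have hyN : y.factorization 2 ≤ N := by
    by_contra! hlt
    exact hydvd ((Nat.pow_dvd_pow 2 hlt).trans (Nat.ordProj_dvd y 2))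
  exact hD y hy (hylog ▸ hA hyN hmA)

/-- A 2-adic level of a sequence whose finite sums all have odd part `ω` modulo `4` contains at
most two terms: the sum of three terms `2 ^ a * o` has odd part `≡ 3 * ω ≢ ω` modulo `4`. -/
theorem finite_setOf_factorization_eq (hx : ∀ i, 0 < x i)
    (hodd : ∀ m ∈ FS x, ordCompl[2] m % 4 = ω) (a : ℕ) :
    {j | (x j).factorization 2 = a}.Finite := by
  by_contra hinf
  obtain ⟨t, hts, ht⟩ := Set.Infinite.exists_subset_ncard_eq hinf 3
  obtain ⟨i, j, k, hij, hik, hjk, rfl⟩ := Set.ncard_eq_three.1 ht.2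
  have hlevel : ∀ l ∈ ({i, j, k} : Set ℕ),
      x l = 2 ^ a * ordCompl[2] (x l) ∧ ¬ 2 ∣ ordCompl[2] (x l) ∧ ordCompl[2] (x l) % 4 = ω := by
    intro l hl
    refine ⟨?_, Nat.not_dvd_ordCompl Nat.prime_two (hx l).ne', hodd _ ?_⟩
    · rw [← (hts hl : (x l).factorization 2 = a), Nat.ordProj_mul_ordCompl_eq_self]
    · simpa using sum_mem_FS x (Finset.singleton_nonempty l)
  obtain ⟨hi, hi2, hi4⟩ := hlevel i (by simp)
  obtain ⟨hj, hj2, hj4⟩ := hlevel j (by simp)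
  obtain ⟨hk, hk2, hk4⟩ := hlevel k (by simp)
  have hsum := hodd _ (sum_mem_FS x (Finset.insert_nonempty i {j, k}))
  rw [Finset.sum_insert (by simp [hij, hik]), Finset.sum_pair hjk, hi, hj, hk, ← mul_add, ← mul_add,
    Nat.ordCompl_pow_mul_of_not_dvd a Nat.prime_two (by omega)] at hsum
  omega

theorem finite_log_image_diff_of_forall_log_mem (hx : ∀ i, 0 < x i) {A : ℕ → Set ℕ}
    (hA : Antitone A) (hodd : ∀ m ∈ FS x, ordCompl[2] m % 4 = ω)
    (htop : ∀ m ∈ FS x, topTwoBits m = τ) (hD : ∀ m ∈ FS x, Nat.log 2 m ∈ A (m.factorization 2))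
    (n : ℕ) : (Nat.log 2 '' FS x \ A n).Finite := by
  have hlow : {j | (x j).factorization 2 < n}.Finite :=
    (Set.finite_Iio n).preimage' fun a _ => finite_setOf_factorization_eq hx hodd a
  refine (Set.finite_Iio (Nat.log 2 (∑ j ∈ hlow.toFinset, x j) + 3)).subset ?_
  rintro _ ⟨⟨m, hm, rfl⟩, hmA⟩
  rw [Set.mem_Iio]
  by_contra! hlarge
  obtain ⟨t, ht, hdisj, hlog⟩ := exists_sum_disjoint_log_eq htop hm hlarge
  have hn : n ≤ (∑ j ∈ t, x j).factorization 2 := by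
    refine (Nat.Prime.pow_dvd_iff_le_factorization Nat.prime_two
      (Finset.sum_pos (fun j _ => hx j) ht).ne').1 (Finset.dvd_sum fun j hj => ?_)
    have hjlow : j ∉ hlow.toFinset := Finset.disjoint_left.1 hdisj hj
    simp only [Set.Finite.mem_toFinset, Set.mem_ofPred_eq, not_lt] at hjlow
    exact (Nat.pow_dvd_pow 2 hjlow).trans (Nat.ordProj_dvd _ _)
  exact hmA (hlog ▸ hA hn (hD _ (sum_mem_FS x ht)))

end FS

theorem StronglySummable.exists_finite_diff_of_antitone {p : Ultrafilter ℕ}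
    (hp : StronglySummable p) {A : ℕ → Set ℕ} (hA : Antitone A)
    (hAp : ∀ n, A n ∈ p.map (Nat.log 2)) : ∃ B ∈ p.map (Nat.log 2), ∀ n, (B \ A n).Finite := by
  obtain ⟨ω, hω⟩ := p.exists_eventually_eq_of_forall_lt fun m => Nat.mod_lt (ordCompl[2] m) four_pos
  obtain ⟨τ, hτ⟩ := p.exists_eventually_eq_of_forall_lt topTwoBits_lt_four
  have image_mem {x : ℕ → ℕ} (hx : FS x ∈ p) : Nat.log 2 '' FS x ∈ p.map (Nat.log 2) :=
    Ultrafilter.mem_map.2 (Filter.mem_of_superset hx (Set.subset_preimage_image _ _))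
  by_cases hD : ∀ᶠ m in p, Nat.log 2 m ∈ A (m.factorization 2)
  · obtain ⟨x, hx, hsub, hFS⟩ := hp _ (hD.and (hω.and hτ))
    exact ⟨_, image_mem hFS, finite_log_image_diff_of_forall_log_mem hx hA
      (fun m hm => (hsub hm).2.1) (fun m hm => (hsub hm).2.2) (fun m hm => (hsub hm).1)⟩
  · obtain ⟨x, hx, hsub, hFS⟩ := hp _ ((Ultrafilter.eventually_not.2 hD).and hτ)
    have hfin := finite_log_image_inter_of_forall_log_notMem hA (fun m hm => (hsub hm).2)
      (fun m hm => (hsub hm).1) (hx 0).ne'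
    exact absurd (Filter.inter_mem (image_mem hFS) (hAp _)) (hp.notMem_map_log_of_finite hfin)

/-- The image of a strongly summable ultrafilter under `bmax` is a P-point. -/
theorem bmax_image_is_Ppoint (p : Ultrafilter ℕ) (hp : StronglySummable p) :
    (∀ n : ℕ, p.map bmax ≠ pure n) ∧
    (∀ A : ℕ → Set ℕ, (∀ n, A n ∈ p.map bmax) →
      ∃ B ∈ p.map bmax, ∀ n, (B \ A n).Finite) := by
  rw [bmax_eq_log]
  refine ⟨fun n hn => hp.notMem_map_log_of_finite (Set.finite_singleton n) (hn ▸ rfl),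
    fun A hA => ?_⟩
  obtain ⟨B, hB, hfin⟩ := hp.exists_finite_diff_of_antitone (A := fun n => ⋂ k ∈ Set.Iic n, A k)
    (fun _ _ hab => Set.biInter_subset_biInter_left (Set.Iic_subset_Iic.2 hab))
    (fun n => (Filter.biInter_mem (Set.finite_Iic n)).2 fun k _ => hA k)
  exact ⟨B, hB, fun n => (hfin n).subset
    (Set.sdiff_subset_sdiff_right (Set.biInter_subset_of_mem (Set.mem_Iic.2 le_rfl)))⟩
end
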